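/- Let X₁,...,Xₙ be i.i.d. real-valued random variables with common law μ, and let R* = min{X₁,...,Xₙ}. Then for any ε ∈ [0,1], the probability (over the N samples) that μ({x : x ≥ R*}) ≥ 1 - ε holds is at least 1 - (1-ε)^N. -/

import Mathlib

open MeasureTheory

/-- Key lemma: the set of points whose upper tail has mass `< q` itself has
mass at most `q`. -/
lemma key_tail_bound (μ : Measure ℝ) (q : ENNReal) :
    μ {x : ℝ | μ {y : ℝ | x ≤ y} < q} ≤ q := by
  set A : Set ℝ := {x : ℝ | μ {y : ℝ | x ≤ y} < q} with hA
  have hup : ∀ x ∈ A, ∀ y, x ≤ y → y ∈ A := by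
    intro x hx y hxy
    refine lt_of_le_of_lt (measure_mono ?_) hx
    intro z hz
    exact le_trans hxy hz
  by_cases h : ∃ a ∈ A, ∀ y ∈ A, a ≤ y
  · obtain ⟨a, ha, hle⟩ := h
    have : μ A ≤ μ {y : ℝ | a ≤ y} := measure_mono (fun y hy => hle y hy)
    exact le_of_lt (lt_of_le_of_lt this ha)
  · push_neg at h
    -- no least element: build a countable directed cover by `Ici`s
    set S : Set ℚ := {r : ℚ | (A ∩ Set.Iio (r : ℝ)).Nonempty} with hS
    have hcov : A ⊆ ⋃ r : S, Set.Ici (r.2.choose) := by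
      intro y hy
      obtain ⟨x, hxA, hxy⟩ := h y hy
      obtain ⟨r, hr1, hr2⟩ := exists_rat_btwn hxy
      have hrS : r ∈ S := ⟨x, hxA, hr1⟩
      refine Set.mem_iUnion.2 ⟨⟨r, hrS⟩, ?_⟩
      have := hrS.choose_spec
      exact le_of_lt (lt_trans this.2 hr2)
    have hdir : Directed (· ⊆ ·) (fun r : S => Set.Ici (r.2.choose)) := by
      intro r s
      rcases le_total (r.2.choose) (s.2.choose) with hle | hle
      · exact ⟨r, subset_rfl, Set.Ici_subset_Ici.2 hle⟩
      · exact ⟨s, Set.Ici_subset_Ici.2 hle, subset_rfl⟩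
    calc μ A ≤ μ (⋃ r : S, Set.Ici (r.2.choose)) := measure_mono hcov
      _ = ⨆ r : S, μ (Set.Ici (r.2.choose)) := hdir.measure_iUnion
      _ ≤ q := by
          refine iSup_le fun r => ?_
          have hrA : r.2.choose ∈ A := r.2.choose_spec.1
          exact le_of_lt hrA

/-- Scenario-based verification bound: with probability at least `1 - (1-ε)^N`
over `N` i.i.d. samples from `μ`, the mass `μ([R*,∞))` above the sample minimum
`R*` is at least `1 - ε`. -/
theorem stmt_1 (μ : Measure ℝ) [IsProbabilityMeasure μ] (ε : ℝ)
    (hε : ε ∈ Set.Icc (0 : ℝ) 1) (N : ℕ) (hN : 0 < N) :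
    (Measure.pi fun _ : Fin N => μ)
        {ω | ENNReal.ofReal (1 - ε) ≤ μ {x | (⨅ i, ω i) ≤ x}} ≥
      1 - (ENNReal.ofReal (1 - ε)) ^ N := by
  set q : ENNReal := ENNReal.ofReal (1 - ε) with hq
  set π : Measure (Fin N → ℝ) := Measure.pi fun _ : Fin N => μ with hπ
  set A : Set ℝ := {x : ℝ | μ {y : ℝ | x ≤ y} < q} with hA
  set E : Set (Fin N → ℝ) := {ω | q ≤ μ {x | (⨅ i, ω i) ≤ x}} with hE
  -- the complement of E is contained in the product set Aᴺ
  have hsub : Eᶜ ⊆ Set.pi Set.univ (fun _ : Fin N => A) := by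
    intro ω hω i _
    have hω' : μ {x | (⨅ i, ω i) ≤ x} < q := lt_of_not_ge hω
    have h1 : (⨅ j, ω j) ≤ ω i := ciInf_le (Finite.bddBelow_range _) i
    have h2 : μ {y : ℝ | ω i ≤ y} ≤ μ {x | (⨅ i, ω i) ≤ x} :=
      measure_mono (fun y hy => le_trans h1 hy)
    exact lt_of_le_of_lt h2 hω'
  have hpi : π (Set.pi Set.univ fun _ : Fin N => A) = (μ A) ^ N := by
    rw [hπ, Measure.pi_pi]
    simp
  have hEc : π Eᶜ ≤ q ^ N := by
    refine le_trans (measure_mono hsub) ?_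
    rw [hpi]
    exact pow_le_pow_left₀ zero_le (key_tail_bound μ q) N
  have hsplit : (1 : ENNReal) ≤ π E + π Eᶜ := by
    have : π Set.univ ≤ π E + π Eᶜ := by
      rw [← Set.union_compl_self E]
      exact measure_union_le E Eᶜ
    simpa using this
  rw [ge_iff_le, tsub_le_iff_right]
  calc (1 : ENNReal) ≤ π E + π Eᶜ := hsplit
    _ ≤ π E + q ^ N := add_le_add_right hEc _
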